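/- Let G be a Snort position and let u and v be adjacent vertices of G that are both tinted the same colour (both Blue or both Red). Then the Snort game on G is equivalent to the Snort game on the graph obtained from G by deleting the edge uv (keeping all vertices and tints). -/

import Mathlib

universe u

namespace SetTheory

/-- Combinatorial pregames (formerly `SetTheory.PGame` in Mathlib, removed since). -/
inductive PGame : Type (u + 1)
  | mk : ∀ α β : Type u, (α → PGame) → (β → PGame) → PGame

namespace PGame

/-- The pair (`x ≤ y`, `x ⧏ y`), defined by mutual recursion:
`x ≤ y ↔ (∀ i, xL i ⧏ y) ∧ (∀ j, x ⧏ yR j)` and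
`x ⧏ y ↔ (∃ i, x ≤ yL i) ∨ (∃ j, xR j ≤ y)`. -/
noncomputable def leLF (x : PGame.{u}) : PGame.{u} → Prop × Prop :=
  PGame.rec (motive := fun _ => PGame.{u} → Prop × Prop)
    (fun _ _ _ _ IHxL IHxR => fun y =>
      PGame.rec (motive := fun _ => Prop × Prop)
        (fun yl yr yL yR IHyL IHyR =>
          ((∀ i, (IHxL i (mk yl yr yL yR)).2) ∧ (∀ j, (IHyR j).2),
           (∃ i, (IHyL i).1) ∨ (∃ j, (IHxR j (mk yl yr yL yR)).1)))
        y) x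

/-- The order `x ≤ y` on pregames. -/
def Le (x y : PGame.{u}) : Prop := (leLF x y).1

/-- Equivalence of pregames: `x ≤ y ∧ y ≤ x`. -/
def Equiv (x y : PGame.{u}) : Prop := Le x y ∧ Le y x

instance : HasEquiv PGame.{u} := ⟨Equiv⟩

/-- Negation of pregames. -/
def neg : PGame.{u} → PGame.{u}
  | mk l r L R => mk r l (fun i => neg (R i)) (fun i => neg (L i))

instance : Neg PGame.{u} := ⟨neg⟩

instance : Zero PGame.{u} := ⟨mk PEmpty PEmpty PEmpty.elim PEmpty.elim⟩

/-- The game `* = {0 | 0}`. -/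
def star : PGame.{u} := mk PUnit PUnit (fun _ => 0) (fun _ => 0)

end PGame

end SetTheory

open SetTheory

namespace SnortFormal

/-- The state of a vertex in a Snort position: untinted (`free`), tinted Blue,
tinted Red, or removed from play (`dead`). -/
inductive Cell : Type
  | free | blue | red | dead
deriving DecidableEq

/-- The effect on a neighbouring cell of Left playing next to it:
it becomes tinted Blue, and if it was tinted Red it is removed. -/
def tintB : Cell → Cell
  | .free => .blue
  | .blue => .blue
  | .red  => .dead
  | .dead => .dead

/-- The effect on a neighbouring cell of Right playing next to it. -/
def tintR : Cell → Cell
  | .free => .red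
  | .blue => .dead
  | .red  => .red
  | .dead => .dead

/-- The position resulting from Left playing on vertex `v`: `v` is removed and
all of its neighbours are tinted Blue (doubly-tinted vertices are removed). -/
def moveL {V : Type} [DecidableEq V] (G : SimpleGraph V) [DecidableRel G.Adj]
    (c : V → Cell) (v : V) : V → Cell :=
  fun w => if w = v then .dead else if G.Adj v w then tintB (c w) else c w

/-- The position resulting from Right playing on vertex `v`. -/
def moveR {V : Type} [DecidableEq V] (G : SimpleGraph V) [DecidableRel G.Adj]
    (c : V → Cell) (v : V) : V → Cell :=
  fun w => if w = v then .dead else if G.Adj v w then tintR (c w) else c w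

/-- The vertices still present in the position. -/
def aliveSet {V : Type} [Fintype V] (c : V → Cell) : Finset V :=
  Finset.univ.filter (fun v => c v ≠ Cell.dead)

theorem alive_move_lt {V : Type} [Fintype V] [DecidableEq V]
    (G : SimpleGraph V) [DecidableRel G.Adj] (c : V → Cell) (v : V)
    (hv : c v ≠ Cell.dead) (f : Cell → Cell) (hf : f Cell.dead = Cell.dead) :
    (aliveSet (fun w => if w = v then Cell.dead else if G.Adj v w then f (c w) else c w)).card
      < (aliveSet c).card := by
  apply Finset.card_lt_card
  constructor
  · intro w hw
    simp only [aliveSet, Finset.mem_filter, Finset.mem_univ, true_and] at hw ⊢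
    by_cases h : w = v
    · simp [h] at hw
    · simp only [h, if_false] at hw
      by_cases hadj : G.Adj v w
      · simp only [hadj, if_true] at hw
        intro hd
        rw [hd, hf] at hw
        exact hw rfl
      · simpa [hadj] using hw
  · intro hsub
    have hv' : v ∈ aliveSet c := by
      simp [aliveSet, hv]
    have := hsub hv'
    simp [aliveSet] at this

/-- The combinatorial pregame given by playing Snort on the graph `G` with
tinting `c`. Left may play on any vertex that is free or tinted Blue; Right
may play on any vertex that is free or tinted Red. -/
def snort {V : Type} [Fintype V] [DecidableEq V] (G : SimpleGraph V) [DecidableRel G.Adj]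
    (c : V → Cell) : PGame :=
  PGame.mk {v : V // c v = Cell.free ∨ c v = Cell.blue}
    {v : V // c v = Cell.free ∨ c v = Cell.red}
    (fun v => snort G (moveL G c v.1))
    (fun v => snort G (moveR G c v.1))
termination_by (aliveSet c).card
decreasing_by
  · exact alive_move_lt G c v.1 (by rcases v.2 with h | h <;> simp [h]) tintB rfl
  · exact alive_move_lt G c v.1 (by rcases v.2 with h | h <;> simp [h]) tintR rfl

/-- Build a simple graph from a (not necessarily symmetric) Boolean adjacency
function by symmetrizing and removing loops. -/
def graphOfBool {W : Type} (f : W → W → Bool) : SimpleGraph W where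
  Adj u v := u ≠ v ∧ (f u v ∨ f v u)
  symm := ⟨fun _ _ ⟨h1, h2⟩ => ⟨h1.symm, h2.symm⟩⟩
  loopless := ⟨fun _ h => h.1 rfl⟩

instance {W : Type} [DecidableEq W] (f : W → W → Bool) :
    DecidableRel (graphOfBool f).Adj :=
  fun u v => inferInstanceAs (Decidable (u ≠ v ∧ (f u v ∨ f v u)))

/-- The game `{A | B}` with unique Left option `A` and unique Right option `B`. -/
def ofPair (A B : PGame) : PGame :=
  PGame.mk PUnit PUnit (fun _ => A) (fun _ => B)

/-- The game `±{A, B} = {A, B | −A, −B}`. -/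
def pmPair (A B : PGame) : PGame :=
  PGame.mk Bool Bool (fun x => if x then A else B) (fun x => if x then -A else -B)


/-- `s(n)`: the game `0` if `n` is even and `* = {0 | 0}` if `n` is odd. -/
def sgame (n : ℕ) : PGame := if Even n then 0 else PGame.star

/-- The star `K_{1,n}`: centre `none`, leaves `some i`. -/
abbrev starGraph (n : ℕ) : SimpleGraph (Option (Fin n)) :=
  graphOfBool (fun u v =>
    match u, v with
    | none, some _ => true
    | _, _ => false)

/-- The graph `G` with the edge `uv` deleted. -/
def delEdge {V : Type} (G : SimpleGraph V) (u v : V) : SimpleGraph V where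
  Adj a b := G.Adj a b ∧ ¬((a = u ∧ b = v) ∨ (a = v ∧ b = u))
  symm := by
    constructor
    intro a b h
    exact ⟨h.1.symm, fun hc => h.2 (by tauto)⟩
  loopless := ⟨fun a h => G.irrefl h.1⟩

instance {V : Type} [DecidableEq V] (G : SimpleGraph V) [DecidableRel G.Adj] (u v : V) :
    DecidableRel (delEdge G u v).Adj := fun a b =>
  inferInstanceAs (Decidable (G.Adj a b ∧ ¬((a = u ∧ b = v) ∨ (a = v ∧ b = u))))

section Aux
variable {V : Type} [Fintype V] [DecidableEq V]

theorem pgame_lf_mk_of_le : ∀ (x : PGame.{u}) {yl yr : Type u} (yL : yl → PGame) (yR : yr → PGame)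
    (i : yl), PGame.Le x (yL i) → (PGame.leLF x (PGame.mk yl yr yL yR)).2
  | PGame.mk _ _ _ _, _, _, _, _, i, h => by
    show _ ∨ _
    exact Or.inl (Exists.intro i h)

theorem pgame_mk_lf_of_le : ∀ (y : PGame.{u}) {xl xr : Type u} (xL : xl → PGame) (xR : xr → PGame)
    (j : xr), PGame.Le (xR j) y → (PGame.leLF (PGame.mk xl xr xL xR) y).2
  | PGame.mk _ _ _ _, _, _, _, _, j, h => by
    show _ ∨ _
    exact Or.inr (Exists.intro j h)

theorem pgame_le_refl : ∀ x : PGame.{u}, PGame.Le x x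
  | PGame.mk _ _ xL xR => by
    show (_ ∧ _)
    exact ⟨fun i => pgame_lf_mk_of_le (xL i) xL xR i (pgame_le_refl (xL i)),
      fun j => pgame_mk_lf_of_le (xR j) xL xR j (pgame_le_refl (xR j))⟩

/-- Invariant: either one of `u`, `v` is dead, or they are tinted the same
colour (Blue or Red). -/
def Inv (u v : V) (c : V → Cell) : Prop :=
  c u = Cell.dead ∨ c v = Cell.dead ∨
    (c u = c v ∧ (c u = Cell.blue ∨ c u = Cell.red))

lemma moveL_delEdge_eq (G : SimpleGraph V) [DecidableRel G.Adj] (u v : V)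
    (huv : G.Adj u v) (c : V → Cell) (hInv : Inv u v c) (w : V)
    (hw : c w = Cell.free ∨ c w = Cell.blue) :
    moveL G c w = moveL (delEdge G u v) c w := by
  funext x
  simp only [moveL]
  by_cases hx : x = w
  · simp [hx]
  · simp only [hx, if_false]
    by_cases hsp : (w = u ∧ x = v) ∨ (w = v ∧ x = u)
    · rcases hsp with ⟨hwu, hxv⟩ | ⟨hwv, hxu⟩
      · rw [hwu, hxv]; rw [hwu] at hw
        have hadj : G.Adj u v := huv
        have hdel : ¬ (delEdge G u v).Adj u v := by simp [delEdge]
        simp only [hadj, if_true, hdel, if_false]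
        rcases hInv with h | h | ⟨h1, h2⟩
        · rcases hw with hw | hw <;> simp [hw] at h
        · simp [h, tintB]
        · rcases h2 with h2 | h2
          · rw [← h1, h2]; rfl
          · rcases hw with hw | hw <;> simp [hw] at h2
      · rw [hwv, hxu]; rw [hwv] at hw
        have hadj : G.Adj v u := huv.symm
        have hdel : ¬ (delEdge G u v).Adj v u := by simp [delEdge]
        simp only [hadj, if_true, hdel, if_false]
        rcases hInv with h | h | ⟨h1, h2⟩
        · simp [h, tintB]
        · rcases hw with hw | hw <;> simp [hw] at h
        · rcases h2 with h2 | h2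
          · rw [h1, ← h1, h2]; rfl
          · rw [h1] at h2; rcases hw with hw | hw <;> simp [hw] at h2
    · have : (delEdge G u v).Adj w x ↔ G.Adj w x := by
        simp only [delEdge]; tauto
      by_cases hadj : G.Adj w x
      · simp [hadj, this.mpr hadj]
      · simp [hadj, this]

lemma moveR_delEdge_eq (G : SimpleGraph V) [DecidableRel G.Adj] (u v : V)
    (huv : G.Adj u v) (c : V → Cell) (hInv : Inv u v c) (w : V)
    (hw : c w = Cell.free ∨ c w = Cell.red) :
    moveR G c w = moveR (delEdge G u v) c w := by
  funext x
  simp only [moveR]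
  by_cases hx : x = w
  · simp [hx]
  · simp only [hx, if_false]
    by_cases hsp : (w = u ∧ x = v) ∨ (w = v ∧ x = u)
    · rcases hsp with ⟨hwu, hxv⟩ | ⟨hwv, hxu⟩
      · rw [hwu, hxv]; rw [hwu] at hw
        have hadj : G.Adj u v := huv
        have hdel : ¬ (delEdge G u v).Adj u v := by simp [delEdge]
        simp only [hadj, if_true, hdel, if_false]
        rcases hInv with h | h | ⟨h1, h2⟩
        · rcases hw with hw | hw <;> simp [hw] at h
        · simp [h, tintR]
        · rcases h2 with h2 | h2
          · rcases hw with hw | hw <;> simp [hw] at h2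
          · rw [← h1, h2]; rfl
      · rw [hwv, hxu]; rw [hwv] at hw
        have hadj : G.Adj v u := huv.symm
        have hdel : ¬ (delEdge G u v).Adj v u := by simp [delEdge]
        simp only [hadj, if_true, hdel, if_false]
        rcases hInv with h | h | ⟨h1, h2⟩
        · simp [h, tintR]
        · rcases hw with hw | hw <;> simp [hw] at h
        · rcases h2 with h2 | h2
          · rw [h1] at h2; rcases hw with hw | hw <;> simp [hw] at h2
          · rw [h1, ← h1, h2]; rfl
    · have : (delEdge G u v).Adj w x ↔ G.Adj w x := by
        simp only [delEdge]; tauto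
      by_cases hadj : G.Adj w x
      · simp [hadj, this.mpr hadj]
      · simp [hadj, this]

lemma inv_move (G : SimpleGraph V) [DecidableRel G.Adj] (u v : V)
    (c : V → Cell) (hInv : Inv u v c) (w : V) (f : Cell → Cell)
    (hfd : f Cell.dead = Cell.dead)
    (hfb : f Cell.blue = Cell.blue ∨ f Cell.blue = Cell.dead)
    (hfr : f Cell.red = Cell.red ∨ f Cell.red = Cell.dead) :
    Inv u v (fun x => if x = w then Cell.dead else if G.Adj w x then f (c x) else c x) := by
  unfold Inv at *
  by_cases hu : u = w
  · left; simp [hu]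
  · by_cases hv : v = w
    · right; left; simp [hv]
    · simp only [hu, hv, if_false]
      rcases hInv with h | h | ⟨h1, h2⟩
      · left; by_cases ha : G.Adj w u <;> simp [ha, h, hfd]
      · right; left; by_cases ha : G.Adj w v <;> simp [ha, h, hfd]
      · rcases h2 with h2 | h2
        · have hv2 : c v = Cell.blue := by rw [← h1, h2]
          by_cases ha : G.Adj w u <;> by_cases hb : G.Adj w v <;>
            simp only [ha, hb, if_true, if_false, h2, hv2] <;>
            rcases hfb with hfb | hfb <;> simp [hfb]
        · have hv2 : c v = Cell.red := by rw [← h1, h2]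
          by_cases ha : G.Adj w u <;> by_cases hb : G.Adj w v <;>
            simp only [ha, hb, if_true, if_false, h2, hv2] <;>
            rcases hfr with hfr | hfr <;> simp [hfr]

lemma snort_delEdge_aux (G : SimpleGraph V) [DecidableRel G.Adj] (u v : V)
    (huv : G.Adj u v) :
    ∀ n (c : V → Cell), (aliveSet c).card = n → Inv u v c →
      snort G c = snort (delEdge G u v) c := by
  intro n
  induction n using Nat.strong_induction_on with
  | _ n IH =>
    intro c hn hInv
    rw [snort, snort]
    congr 1
    · funext w
      have hL := moveL_delEdge_eq G u v huv c hInv w.1 w.2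
      rw [← hL]
      have hlt : (aliveSet (moveL G c w.1)).card < n := by
        rw [← hn]
        exact alive_move_lt G c w.1 (by rcases w.2 with h | h <;> simp [h]) tintB rfl
      exact IH _ hlt _ rfl (inv_move G u v c hInv w.1 tintB rfl (Or.inl rfl) (Or.inr rfl))
    · funext w
      have hR := moveR_delEdge_eq G u v huv c hInv w.1 w.2
      rw [← hR]
      have hlt : (aliveSet (moveR G c w.1)).card < n := by
        rw [← hn]
        exact alive_move_lt G c w.1 (by rcases w.2 with h | h <;> simp [h]) tintR rfl
      exact IH _ hlt _ rfl (inv_move G u v c hInv w.1 tintR rfl (Or.inr rfl) (Or.inl rfl))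

end Aux

/-- if `u` and `v` are adjacent and tinted the same colour, the edge
`uv` may be deleted without changing the Snort game. -/
theorem snort_delete_edge_same_tint {V : Type} [Fintype V] [DecidableEq V]
    (G : SimpleGraph V) [DecidableRel G.Adj] (c : V → Cell) (u v : V)
    (huv : G.Adj u v) (hsame : c u = c v)
    (hcol : c u = Cell.blue ∨ c u = Cell.red) :
    snort G c ≈ snort (delEdge G u v) c := by
  have h := snort_delEdge_aux G u v huv _ c rfl
    (Or.inr (Or.inr ⟨hsame, hcol⟩))
  rw [h]
  exact ⟨pgame_le_refl _, pgame_le_refl _⟩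
end SnortFormal
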